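/- Let I = [a,b] be a compact interval in R and f: I → I a continuous increasing function with f(a) = a, f(b) = b, and f(x) ≠ x for all x ∈ (a,b). Then h_pol(f) = 1. -/

import Mathlib

open Filter Metric Set

variable {Z : Type*} [MetricSpace Z]

/-- The dynamical metric `d_n^f(x,y) = max_{0 ≤ k ≤ n-1} d(f^k x, f^k y)`. -/
noncomputable def dynDist (f : Z → Z) (n : ℕ) (x y : Z) : ℝ :=
  ((Finset.range n).sup fun k => nndist (f^[k] x) (f^[k] y) : NNReal)

/-- `G_n^f(Y,ε)`: the minimal number of balls of radius `ε` for the metric `d_n^f`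
needed to cover `Y`. -/
noncomputable def coverNum (f : Z → Z) (n : ℕ) (Y : Set Z) (ε : ℝ) : ℕ :=
  sInf {m : ℕ | ∃ s : Finset Z, s.card = m ∧
    Y ⊆ ⋃ c ∈ s, {y : Z | dynDist f n c y ≤ ε}}

/-- The polynomial entropy of `f` on `Y`:
`h_pol(f,Y) = lim_{ε→0} limsup_{n→∞} log G_n^f(Y,ε) / log n`
(realized, by antitonicity in `ε`, as the supremum over `ε > 0`). -/
noncomputable def hpolOn (f : Z → Z) (Y : Set Z) : EReal :=
  ⨆ ε : {e : ℝ // 0 < e}, Filter.atTop.limsup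
    (fun n : ℕ => ((Real.log (coverNum f n Y ε.1) / Real.log n : ℝ) : EReal))

/-- The polynomial entropy of `f`. -/
noncomputable def hpol (f : Z → Z) : EReal := hpolOn f Set.univ

/-! An increasing homeomorphism `f` of `[a,b]` is an order automorphism. If a finite set `P`
meets every subinterval of length `> ε`, the points `f^{-k} p` (`p ∈ P`, `k < n`) form an
`ε`-cover for `d_n^f`, each `y` being covered by the largest of them below `y`; so
`G_n^f(ε) ≤ |P| n`. Conversely, if `f c ≠ c`, the backward orbit `f^{-j} c`, `j < n`, moves
monotonically away from `c`, hence is `d(f⁻¹ c, c)`-separated for `d_n^f`, and `G_n^f(ε) ≥ n`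
for small `ε`. -/

open Topology

section DynamicalCovers

variable {f : Z → Z} {n : ℕ} {ε : ℝ}

lemma dist_iterate_le_dynDist (f : Z → Z) {k : ℕ} (hk : k < n) (x y : Z) :
    dist (f^[k] x) (f^[k] y) ≤ dynDist f n x y := by
  rw [dist_nndist]
  exact_mod_cast Finset.le_sup (f := fun k => nndist (f^[k] x) (f^[k] y))
    (Finset.mem_range.mpr hk)

lemma dynDist_le_iff {x y : Z} (hε : 0 ≤ ε) :
    dynDist f n x y ≤ ε ↔ ∀ k < n, dist (f^[k] x) (f^[k] y) ≤ ε := by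
  lift ε to NNReal using hε
  simp only [dynDist, NNReal.coe_le_coe, Finset.sup_le_iff, Finset.mem_range, ← coe_nndist]

def IsDynCover (f : Z → Z) (n : ℕ) (Y : Set Z) (ε : ℝ) (s : Finset Z) : Prop :=
  Y ⊆ ⋃ c ∈ s, {y : Z | dynDist f n c y ≤ ε}

lemma coverNum_le_card {Y : Set Z} {s : Finset Z} (hs : IsDynCover f n Y ε s) :
    coverNum f n Y ε ≤ s.card :=
  Nat.sInf_le ⟨s, rfl, hs⟩

lemma card_le_coverNum {ι : Type*} [Fintype ι] {Y : Set Z} {s : Finset Z}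
    (hs : IsDynCover f n Y ε s) {w : ι → Z} (hwY : ∀ i, w i ∈ Y)
    (hsep : Pairwise fun i j => ∃ k < n, 2 * ε < dist (f^[k] (w i)) (f^[k] (w j))) :
    Fintype.card ι ≤ coverNum f n Y ε := by
  refine le_csInf ⟨s.card, s, rfl, hs⟩ ?_
  rintro _ ⟨t, rfl, ht⟩
  have hcenter : ∀ i, ∃ c ∈ t, dynDist f n c (w i) ≤ ε := by
    simpa [IsDynCover] using fun i => ht (hwY i)
  choose c hct hc using hcenter
  have hinj : Function.Injective c := by
    intro i j hij
    by_contra hne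
    obtain ⟨k, hk, hfar⟩ := hsep hne
    have hi := (dist_iterate_le_dynDist f hk (c i) (w i)).trans (hc i)
    have hj := (dist_iterate_le_dynDist f hk (c j) (w j)).trans (hc j)
    rw [hij] at hi
    linarith [dist_triangle_left (f^[k] (w i)) (f^[k] (w j)) (f^[k] (c j))]
  calc Fintype.card ι = (Finset.univ : Finset ι).card := Finset.card_univ.symm
    _ ≤ t.card := Finset.card_le_card_of_injOn c (fun i _ => hct i) hinj.injOn

end DynamicalCovers

section LogRatio

lemma limsup_log_div_log_le_one {u : ℕ → ℕ} {C : ℕ} (hu : ∀ᶠ n in atTop, u n ≤ C * n) :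
    atTop.limsup (fun n : ℕ => ((Real.log (u n) / Real.log n : ℝ) : EReal)) ≤ 1 := by
  have hlim : Tendsto (fun n : ℕ => ((1 + Real.log (C + 1) / Real.log n : ℝ) : EReal))
      atTop (𝓝 1) := by
    rw [← EReal.coe_one, EReal.tendsto_coe]
    simpa using tendsto_const_nhds.add
      ((Real.tendsto_log_atTop.comp tendsto_natCast_atTop_atTop).const_div_atTop
        (Real.log (C + 1)))
  refine (limsup_le_limsup ?_).trans_eq hlim.limsup_eq
  filter_upwards [hu, eventually_ge_atTop 2] with n hun hn
  have hlogn : 0 < Real.log n := Real.log_pos (by exact_mod_cast hn)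
  have hlog : Real.log (u n) ≤ Real.log (C + 1) + Real.log n := by
    rw [← Real.log_mul (by positivity) (by positivity)]
    rcases (u n).eq_zero_or_pos with h0 | hpos
    · rw [h0, Nat.cast_zero, Real.log_zero]
      have hn1 : (1 : ℝ) ≤ n := by exact_mod_cast one_le_two.trans hn
      exact Real.log_nonneg (one_le_mul_of_one_le_of_one_le (by simp) hn1)
    · refine Real.log_le_log (by exact_mod_cast hpos) ?_
      calc (u n : ℝ) ≤ C * n := by exact_mod_cast hun
        _ ≤ (C + 1) * n := by nlinarith [(Nat.cast_nonneg n : (0 : ℝ) ≤ n)]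
  rw [EReal.coe_le_coe_iff, div_le_iff₀ hlogn, add_mul, div_mul_cancel₀ _ hlogn.ne']
  linarith

lemma one_le_limsup_log_div_log {u : ℕ → ℕ} (hu : ∀ᶠ n in atTop, n ≤ u n) :
    1 ≤ atTop.limsup (fun n : ℕ => ((Real.log (u n) / Real.log n : ℝ) : EReal)) := by
  refine le_limsup_of_frequently_le (Eventually.frequently ?_)
  filter_upwards [hu, eventually_ge_atTop 2] with n hun hn
  have hlogn : 0 < Real.log n := Real.log_pos (by exact_mod_cast hn)
  rw [← EReal.coe_one, EReal.coe_le_coe_iff, le_div_iff₀ hlogn, one_mul]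
  exact Real.log_le_log (by positivity) (by exact_mod_cast hun)

end LogRatio

theorem hpol_eq_one_of_linear_growth {f : Z → Z}
    (hupper : ∀ ε > 0, ∃ C : ℕ, ∀ᶠ n in atTop, coverNum f n univ ε ≤ C * n)
    (hlower : ∃ ε > 0, ∀ᶠ n in atTop, n ≤ coverNum f n univ ε) :
    hpol f = 1 := by
  refine le_antisymm (iSup_le fun ε => ?_) ?_
  · obtain ⟨C, hC⟩ := hupper ε.1 ε.2
    exact limsup_log_div_log_le_one hC
  · obtain ⟨ε, hε, h⟩ := hlower
    exact le_iSup_of_le (⟨ε, hε⟩ : {e : ℝ // 0 < e}) (one_le_limsup_log_div_log h)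

theorem exists_isDynCover_of_orderIso [LinearOrder Z] (e : Z ≃o Z) {ε : ℝ} (hε : 0 ≤ ε)
    {P : Finset Z} (hbot : ∀ y, ∃ p ∈ P, p ≤ y)
    (hgap : ∀ u v : Z, u ≤ v → ε < dist u v → ∃ p ∈ P, u < p ∧ p < v) {n : ℕ} (hn : 0 < n) :
    ∃ s : Finset Z, s.card ≤ n * P.card ∧ IsDynCover e n univ ε s := by
  classical
  let s := (Finset.range n ×ˢ P).image fun kp => e.symm^[kp.1] kp.2
  have hmem : ∀ k < n, ∀ p ∈ P, e.symm^[k] p ∈ s := fun k hk p hp =>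
    Finset.mem_image_of_mem (fun kp : ℕ × Z => e.symm^[kp.1] kp.2)
      (Finset.mem_product.2 ⟨Finset.mem_range.2 hk, hp⟩ : (k, p) ∈ Finset.range n ×ˢ P)
  refine ⟨s, Finset.card_image_le.trans (by simp), fun y _ => ?_⟩
  obtain ⟨p₀, hp₀, hp₀y⟩ := hbot y
  have hne : (s.filter (· ≤ y)).Nonempty := ⟨p₀, Finset.mem_filter.2 ⟨hmem 0 hn p₀ hp₀, hp₀y⟩⟩
  set q := (s.filter (· ≤ y)).max' hne
  obtain ⟨hqs, hqy⟩ := Finset.mem_filter.1 ((s.filter (· ≤ y)).max'_mem hne)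
  refine mem_iUnion₂.2 ⟨q, hqs, (dynDist_le_iff hε).2 fun k hk => ?_⟩
  -- A point of `P` strictly between `e^[k] q` and `e^[k] y` would pull back to a point of `s`
  -- strictly between `q` and `y`.
  by_contra! hfar
  obtain ⟨p, hp, hqp, hpy⟩ := hgap _ _ (e.monotone.iterate k hqy) hfar
  have hek : StrictMono (⇑e)^[k] := e.strictMono.iterate k
  have hp_eq : (⇑e)^[k] (e.symm^[k] p) = p := (Function.LeftInverse.iterate e.apply_symm_apply k) p
  rw [← hp_eq] at hqp hpy
  have hle : e.symm^[k] p ≤ q :=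
    Finset.le_max' _ _ (Finset.mem_filter.2 ⟨hmem k hk p hp, (hek.lt_iff_lt.1 hpy).le⟩)
  exact (hek.lt_iff_lt.1 hqp).not_ge hle

lemma exists_finset_Icc_gap {a b : ℝ} (hab : a ≤ b) {ε : ℝ} (hε : 0 < ε) :
    ∃ P : Finset (Icc a b), (∀ y, ∃ p ∈ P, p ≤ y) ∧
      ∀ u v : Icc a b, u ≤ v → ε < dist u v → ∃ p ∈ P, u < p ∧ p < v := by
  classical
  obtain ⟨t, -, ht, hcov⟩ := finite_approx_of_totallyBounded
    (isCompact_univ (X := Icc a b)).totallyBounded (ε / 2) (half_pos hε)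
  refine ⟨insert ⟨a, left_mem_Icc.2 hab⟩ ht.toFinset,
    fun y => ⟨_, Finset.mem_insert_self _ _, y.2.1⟩, fun u v huv hfar => ?_⟩
  -- a point within `ε / 2` of the midpoint of `[u, v]` lies strictly inside it
  let m : Icc a b := ⟨(u + v) / 2, by linarith [u.2.1, v.2.1], by linarith [u.2.2, v.2.2]⟩
  obtain ⟨p, hp, hmp⟩ := mem_iUnion₂.1 (hcov (mem_univ m))
  have huv' : (u : ℝ) ≤ v := huv
  rw [Subtype.dist_eq, Real.dist_eq, abs_sub_comm, abs_of_nonneg (sub_nonneg.2 huv')] at hfar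
  rw [mem_ball, Subtype.dist_eq, Real.dist_eq, abs_lt] at hmp
  have hm : (m : ℝ) = (u + v) / 2 := rfl
  exact ⟨p, Finset.mem_insert_of_mem (ht.mem_toFinset.2 hp),
    show (u : ℝ) < p by linarith [hmp.2], show (p : ℝ) < v by linarith [hmp.1]⟩

lemma dist_le_dist_iterate_of_monotone {s : Set ℝ} {g : s → s} (hg : Monotone g) (c : s)
    {m : ℕ} (hm : 1 ≤ m) : dist (g c) c ≤ dist (g^[m] c) c := by
  simp only [Subtype.dist_eq, Real.dist_eq]
  rcases le_total (g c) c with h | h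
  · have hgm : ((g^[m] c : s) : ℝ) ≤ g c := hg.antitone_iterate_of_map_le h hm
    have h' : ((g c : s) : ℝ) ≤ c := h
    rw [abs_of_nonpos (sub_nonpos.2 h'), abs_of_nonpos (by linarith)]
    linarith
  · have hgm : ((g c : s) : ℝ) ≤ g^[m] c := hg.monotone_iterate_of_le_map h hm
    have h' : (c : ℝ) ≤ g c := h
    rw [abs_of_nonneg (sub_nonneg.2 h'), abs_of_nonneg (by linarith)]
    linarith

lemma dist_symm_le_dist_iterate_orbit {s : Set ℝ} (e : s ≃o s) (c : s) {i j : ℕ} (hij : i < j) :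
    dist (e.symm c) c ≤ dist ((⇑e)^[i] (e.symm^[i] c)) ((⇑e)^[i] (e.symm^[j] c)) := by
  obtain ⟨d, rfl⟩ := Nat.exists_eq_add_of_lt hij
  have hinv := Function.LeftInverse.iterate e.apply_symm_apply i
  rw [add_assoc, Function.iterate_add_apply, hinv, hinv, dist_comm c]
  exact dist_le_dist_iterate_of_monotone e.symm.monotone c (Nat.le_add_left 1 d)

theorem hpol_orderIso_Icc_eq_one {a b : ℝ} (hab : a ≤ b) (e : Icc a b ≃o Icc a b)
    {c : Icc a b} (hc : e c ≠ c) : hpol e = 1 := by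
  have hcover : ∀ ε > 0, ∃ C : ℕ, ∀ n > 0,
      ∃ s : Finset (Icc a b), s.card ≤ C * n ∧ IsDynCover e n univ ε s := by
    intro ε hε
    obtain ⟨P, hbot, hgap⟩ := exists_finset_Icc_gap hab hε
    refine ⟨P.card, fun n hn => ?_⟩
    obtain ⟨s, hsP, hs⟩ := exists_isDynCover_of_orderIso e hε.le hbot hgap hn
    exact ⟨s, hsP.trans_eq (mul_comm _ _), hs⟩
  refine hpol_eq_one_of_linear_growth (fun ε hε => ?_) ?_
  · obtain ⟨C, hC⟩ := hcover ε hε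
    refine ⟨C, (eventually_gt_atTop 0).mono fun n hn => ?_⟩
    obtain ⟨s, hsC, hs⟩ := hC n hn
    exact (coverNum_le_card hs).trans hsC
  · set δ := dist (e.symm c) c
    have hδ : 0 < δ := dist_pos.2 fun h => hc (e.symm_apply_eq.1 h).symm
    obtain ⟨C, hC⟩ := hcover (δ / 3) (by positivity)
    refine ⟨δ / 3, by positivity, (eventually_gt_atTop 0).mono fun n hn => ?_⟩
    obtain ⟨s, -, hs⟩ := hC n hn
    have hsep : Pairwise fun i j : Fin n => ∃ k < n,
        2 * (δ / 3) < dist ((⇑e)^[k] (e.symm^[i] c)) ((⇑e)^[k] (e.symm^[j] c)) := by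
      intro i j hij
      rcases lt_or_gt_of_ne (Fin.val_injective.ne hij) with h | h
      · exact ⟨i, i.2, by linarith [dist_symm_le_dist_iterate_orbit e c h]⟩
      · refine ⟨j, j.2, ?_⟩
        rw [dist_comm]
        linarith [dist_symm_le_dist_iterate_orbit e c h]
    simpa using card_le_coverNum (w := fun i : Fin n => e.symm^[i] c) hs (fun _ => mem_univ _) hsep

lemma Continuous.surjective_of_isBot_isTop_mem_range {X Y : Type*} [TopologicalSpace X]
    [PreconnectedSpace X] [LinearOrder Y] [TopologicalSpace Y] [OrderClosedTopology Y]
    {f : X → Y} (hf : Continuous f) {y₀ y₁ : Y} (h₀ : IsBot y₀) (h₁ : IsTop y₁)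
    (hy₀ : y₀ ∈ range f) (hy₁ : y₁ ∈ range f) : Function.Surjective f := fun y =>
  (isPreconnected_range hf).Icc_subset hy₀ hy₁ ⟨h₀ y, h₁ y⟩

/-- **Lemma (interval maps with no interior fixed point).**
Let `I = [a,b]` and `f : I → I` be continuous and increasing with `f(a) = a`,
`f(b) = b` and `f(x) ≠ x` for `x ∈ (a,b)`. Then `h_pol(f) = 1`. -/
theorem hpol_interval_map (a b : ℝ) (hab : a < b)
    (f : Set.Icc a b → Set.Icc a b) (hfc : Continuous f) (hfm : StrictMono f)
    (hfa : f ⟨a, Set.left_mem_Icc.mpr hab.le⟩ = ⟨a, Set.left_mem_Icc.mpr hab.le⟩)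
    (hfb : f ⟨b, Set.right_mem_Icc.mpr hab.le⟩ = ⟨b, Set.right_mem_Icc.mpr hab.le⟩)
    (hfix : ∀ x : Set.Icc a b, a < (x : ℝ) → (x : ℝ) < b → f x ≠ x) :
    hpol f = 1 := by
  have := Subtype.preconnectedSpace (isPreconnected_Icc (a := a) (b := b))
  have hsurj : Function.Surjective f :=
    hfc.surjective_of_isBot_isTop_mem_range (fun y => y.2.1) (fun y => y.2.2) ⟨_, hfa⟩ ⟨_, hfb⟩
  let c : Icc a b := ⟨(a + b) / 2, by linarith, by linarith⟩
  have hc : f c ≠ c := hfix c (show a < (a + b) / 2 by linarith) (show (a + b) / 2 < b by linarith)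
  rw [← hfm.coe_orderIsoOfSurjective f hsurj] at hc ⊢
  exact hpol_orderIso_Icc_eq_one hab.le _ hc
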